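/- (Correctness of Hier-Prox.) Let v ∈ ℝ with v ≠ 0, u ∈ ℝ^K, λ ≥ 0, M > 0. Sort the entries of u so that |u_(1)| ≥ ... ≥ |u_(K)|, with conventions |u_(0)| = +∞ and |u_(K+1)| = 0. For m ∈ {0,1,...,K} define w_m = (M/(1+mM²)) · S_λ( |v| + M·Σ_{i=1}^m |u_(i)| ). Let m̃ be the smallest m ∈ {0,...,K} such that |u_(m+1)| ≤ w_m ≤ |u_(m)|. Then the pair (b̃, W̃) with b̃ = (1/M)·sign(v)·w_{m̃} and W̃_j = sign(u_j)·min{ w_{m̃}, |u_j| } for each j is a global minimizer of: minimize ½(v − b)² + ½‖u − W‖₂² + λ|b| over (b, W) ∈ ℝ × ℝ^K subject to ‖W‖_∞ ≤ M|b|. -/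
import Mathlib


/-- Soft-thresholding operator `S_t(x) = sign(x) · max(|x| − t, 0)`. -/
noncomputable def st (t x : ℝ) : ℝ := Real.sign x * max (|x| - t) 0

/-- `du u σ m = |u_(m)|`, the `m`-th largest absolute entry of `u` (1-based, via a sorting
permutation `σ`), with the out-of-range convention `|u_(m)| = 0` for `m > K`
(implementing `|u_(K+1)| = 0`). -/
noncomputable def du {K : ℕ} (u : Fin K → ℝ) (σ : Equiv.Perm (Fin K)) (m : ℕ) : ℝ :=
  if h : m - 1 < K then |u (σ ⟨m - 1, h⟩)| else 0

/-- `w_m = (M/(1+mM²)) · S_λ( |v| + M·Σ_{i=1}^m |u_(i)| )`. -/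
noncomputable def wm {K : ℕ} (u : Fin K → ℝ) (σ : Equiv.Perm (Fin K))
    (lam M : ℝ) (v : ℝ) (m : ℕ) : ℝ :=
  (M / (1 + (m : ℝ) * M ^ 2)) * st lam (|v| + M * ∑ i ∈ Finset.Icc 1 m, du u σ i)

/-- Objective of the single-feature Hier-Prox problem:
`½(v − b)² + ½‖u − W‖₂² + λ|b|`. -/
noncomputable def obj1 {K : ℕ} (lam : ℝ) (v : ℝ) (u : Fin K → ℝ)
    (b : ℝ) (W : Fin K → ℝ) : ℝ :=
  (1 / 2) * (v - b) ^ 2 + (1 / 2) * ∑ j, (u j - W j) ^ 2 + lam * |b|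

lemma sq_max_lb (a w w' : ℝ) :
    (1/2) * (max (a - w) 0)^2 - (max (a - w) 0) * (w' - w)
      ≤ (1/2) * (max (a - w') 0)^2 := by
  rcases le_or_gt (a - w) 0 with h | h
  · rw [max_eq_right h]
    have : (0:ℝ) ≤ (1/2) * (max (a - w') 0)^2 := by positivity
    linarith
  · rw [max_eq_left h.le]
    have ht1 : a - w' ≤ max (a - w') 0 := le_max_left _ _
    have ht0 : (0:ℝ) ≤ max (a - w') 0 := le_max_right _ _
    nlinarith [sq_nonneg (max (a - w') 0 - (a - w')), sq_nonneg (w' - w), mul_nonneg ht0 ht0]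

lemma lin_aux {P1 P2 L Q1 Q2 Lb X Y Z G : ℝ} (h1 : P1 + X ≤ Q1) (h2 : P2 - Y ≤ Q2)
    (h3 : Lb = L + Z) (h4 : G = X + Z - Y) (h5 : 0 ≤ G) :
    P1 + P2 + L ≤ Q1 + Q2 + Lb := by linarith

set_option maxHeartbeats 2000000 in
/-- Correctness of Hier-Prox: if `m̃` is the smallest `m ∈ {0,…,K}` with
`|u_(m+1)| ≤ w_m ≤ |u_(m)|` (conventions `|u_(0)| = +∞`, i.e. the upper condition is vacuous
at `m = 0`, and `|u_(K+1)| = 0`), then `b̃ = (1/M)·sign(v)·w_{m̃}` together with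
`W̃_j = sign(u_j)·min{w_{m̃}, |u_j|}` is a global minimizer of
`½(v − b)² + ½‖u − W‖₂² + λ|b|` subject to `‖W‖_∞ ≤ M|b|`. -/
theorem stmt2 (K : ℕ) (hK : 1 ≤ K)
    (lam M : ℝ) (hlam : 0 ≤ lam) (hM : 0 < M)
    (v : ℝ) (hv : v ≠ 0) (u : Fin K → ℝ)
    (σ : Equiv.Perm (Fin K))
    (hsort : ∀ i j : Fin K, i ≤ j → |u (σ j)| ≤ |u (σ i)|)
    (mt : ℕ) (hmt : mt ≤ K)
    (hcond : du u σ (mt + 1) ≤ wm u σ lam M v mt ∧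
      (0 < mt → wm u σ lam M v mt ≤ du u σ mt))
    (hsmallest : ∀ m, m ≤ K →
      (du u σ (m + 1) ≤ wm u σ lam M v m ∧ (0 < m → wm u σ lam M v m ≤ du u σ m)) →
      mt ≤ m) :
    (∀ j, |Real.sign (u j) * min (wm u σ lam M v mt) (abs (u j))|
        ≤ M * |(1 / M) * Real.sign v * wm u σ lam M v mt|) ∧
    ∀ (b : ℝ) (W : Fin K → ℝ), (∀ j, |W j| ≤ M * |b|) →
      obj1 lam v u ((1 / M) * Real.sign v * wm u σ lam M v mt)
          (fun j => Real.sign (u j) * min (wm u σ lam M v mt) (abs (u j)))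
        ≤ obj1 lam v u b W := by
  have hM0 : M ≠ 0 := hM.ne'
  set w := wm u σ lam M v mt with hwdef
  set S := ∑ i ∈ Finset.Icc 1 mt, du u σ i with hSdef
  have hdu0 : ∀ m, 0 ≤ du u σ m := by
    intro m; unfold du; split <;> positivity
  have hS0 : 0 ≤ S := Finset.sum_nonneg fun i _ => hdu0 i
  have hv0 : 0 < |v| := abs_pos.mpr hv
  set A := |v| + M * S with hAdef
  have hA0 : 0 < A := by positivity
  have hden : (0:ℝ) < 1 + (mt:ℝ) * M^2 := by positivity
  have hw : w = (M / (1 + (mt:ℝ) * M^2)) * max (A - lam) 0 := by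
    rw [hwdef, wm, st, Real.sign_of_pos hA0, abs_of_pos hA0, one_mul]
  have hw0 : 0 ≤ w := by rw [hw]; positivity
  -- sign facts
  have hsv : |Real.sign v| = 1 := by
    rcases hv.lt_or_gt with h | h
    · rw [Real.sign_of_neg h]; norm_num
    · rw [Real.sign_of_pos h]; norm_num
  have hsu : ∀ x : ℝ, |Real.sign x| ≤ 1 := by
    intro x
    rcases lt_trichotomy x 0 with h | h | h
    · rw [Real.sign_of_neg h]; norm_num
    · rw [h, Real.sign_zero]; norm_num
    · rw [Real.sign_of_pos h]; norm_num
  -- feasibility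
  have hfeas1 : ∀ j, |Real.sign (u j) * min w (|u j|)| ≤ M * |(1 / M) * Real.sign v * w| := by
    intro j
    have hmin0 : 0 ≤ min w (|u j|) := le_min hw0 (abs_nonneg _)
    have hR : M * |(1 / M) * Real.sign v * w| = w := by
      rw [abs_mul, abs_mul, hsv, abs_of_nonneg hw0, abs_of_pos (by positivity : (0:ℝ) < 1/M)]
      field_simp
    rw [hR, abs_mul, abs_of_nonneg hmin0]
    calc |Real.sign (u j)| * min w (|u j|) ≤ 1 * min w (|u j|) :=
          mul_le_mul_of_nonneg_right (hsu _) hmin0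
      _ = min w (|u j|) := one_mul _
      _ ≤ w := min_le_left _ _
  refine ⟨hfeas1, ?_⟩
  -- order facts
  have hle : ∀ j : Fin K, mt ≤ (j:ℕ) → |u (σ j)| ≤ w := by
    intro j hj
    have hmtK : mt < K := lt_of_le_of_lt hj j.isLt
    have h1 : du u σ (mt + 1) = |u (σ ⟨mt, hmtK⟩)| := by
      simp only [du, Nat.add_sub_cancel, dif_pos hmtK]
    have := hcond.1
    rw [h1] at this
    exact le_trans (hsort ⟨mt, hmtK⟩ j (by simpa [Fin.le_def] using hj)) this
  have hge : ∀ j : Fin K, (j:ℕ) < mt → w ≤ |u (σ j)| := by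
    intro j hj
    have hmt0 : 0 < mt := Nat.pos_of_ne_zero (by omega)
    have hlt : mt - 1 < K := by omega
    have h1 : du u σ mt = |u (σ ⟨mt - 1, hlt⟩)| := by
      unfold du; rw [dif_pos hlt]
    have h2 := hcond.2 hmt0
    rw [h1] at h2
    exact le_trans h2 (hsort j ⟨mt - 1, hlt⟩ (by simp [Fin.le_def]; omega))
  -- sum identity
  have hsum : ∑ j, max (|u j| - w) 0 = S - mt * w := by
    have e1 : ∑ j, max (|u j| - w) 0 = ∑ j, max (|u (σ j)| - w) 0 :=
      (Equiv.sum_comp σ fun j => max (|u j| - w) 0).symm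
    have e2 : ∀ j : Fin K, max (|u (σ j)| - w) 0
        = if (j:ℕ) < mt then |u (σ j)| - w else 0 := by
      intro j
      by_cases hj : (j:ℕ) < mt
      · rw [if_pos hj, max_eq_left (by linarith [hge j hj])]
      · rw [if_neg hj, max_eq_right (by linarith [hle j (le_of_not_gt hj)])]
    rw [e1]
    simp_rw [e2]
    rw [← Finset.sum_filter]
    have e3 : ∑ j ∈ Finset.univ.filter (fun j : Fin K => (j:ℕ) < mt), (|u (σ j)| - w)
        = ∑ i ∈ Finset.Icc 1 mt, (du u σ i - w) := by
      apply Finset.sum_nbij' (i := fun j : Fin K => (j:ℕ) + 1)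
        (j := fun i : ℕ => if h : i - 1 < K then (⟨i - 1, h⟩ : Fin K) else ⟨0, hK⟩)
      · intro a ha
        simp only [Finset.mem_filter, Finset.mem_univ, true_and] at ha
        simp only [Finset.mem_Icc]
        omega
      · intro i hi
        simp only [Finset.mem_Icc] at hi
        have h1 : i - 1 < K := by omega
        rw [dif_pos h1]
        simp only [Finset.mem_filter, Finset.mem_univ, true_and]
        omega
      · intro a ha
        simp only [Finset.mem_filter, Finset.mem_univ, true_and] at ha
        have h1 : (a:ℕ) + 1 - 1 < K := by omega
        rw [dif_pos h1]
        ext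
        simp
      · intro i hi
        simp only [Finset.mem_Icc] at hi
        have h1 : i - 1 < K := by omega
        rw [dif_pos h1]
        simp only
        omega
      · intro a ha
        simp only [Finset.mem_filter, Finset.mem_univ, true_and] at ha
        have h1 : (a:ℕ) + 1 - 1 < K := by omega
        have h2 : (⟨(a:ℕ) + 1 - 1, h1⟩ : Fin K) = a := by ext; simp
        simp only [du, dif_pos h1, h2]
    rw [e3, Finset.sum_sub_distrib, Finset.sum_const, Nat.card_Icc,
      Nat.add_sub_cancel, nsmul_eq_mul]
  -- gradient facts
  set g := w / M^2 - |v| / M + lam / M - S + mt * w with hgdef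
  have hg : 0 ≤ g ∧ g * w = 0 := by
    rcases le_or_gt (A - lam) 0 with h | h
    · have hw' : w = 0 := by rw [hw, max_eq_right h, mul_zero]
      constructor
      · have : g = (lam - A) / M := by
          rw [hgdef, hw', hAdef]; field_simp; ring
        rw [this]
        apply div_nonneg (by linarith) hM.le
      · rw [hw', mul_zero]
    · have hwv : w * (1 + (mt:ℝ) * M^2) = M * (A - lam) := by
        rw [hw, max_eq_left h.le]
        field_simp
      have hgz : g = 0 := by
        have hM2 : (M:ℝ)^2 ≠ 0 := pow_ne_zero _ hM0
        have he : g * M^2 = w * (1 + (mt:ℝ) * M^2) - M * (A - lam) := by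
          rw [hgdef]
          field_simp
          ring
        have h0 : g * M^2 = 0 := by rw [he, hwv, sub_self]
        rcases mul_eq_zero.mp h0 with h' | h'
        · exact h'
        · exact absurd h' hM2
      rw [hgz]; simp
  -- value at the candidate
  have hval : obj1 lam v u ((1 / M) * Real.sign v * w)
      (fun j => Real.sign (u j) * min w (|u j|))
      = (1/2) * (|v| - w/M)^2 + (1/2) * ∑ j, (max (|u j| - w) 0)^2 + lam * (w/M) := by
    unfold obj1
    have e1 : (v - (1 / M) * Real.sign v * w)^2 = (|v| - w/M)^2 := by
      rcases hv.lt_or_gt with h | h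
      · rw [Real.sign_of_neg h, abs_of_neg h]; field_simp; try ring
      · rw [Real.sign_of_pos h, abs_of_pos h]; field_simp; try ring
    have e2 : ∀ j : Fin K, (u j - Real.sign (u j) * min w (|u j|))^2
        = (max (|u j| - w) 0)^2 := by
      intro j
      rcases lt_trichotomy (u j) 0 with h | h | h
      · rw [Real.sign_of_neg h, abs_of_neg h]
        rcases le_total w (-(u j)) with h' | h'
        · rw [min_eq_left h', max_eq_left (by linarith)]; ring
        · rw [min_eq_right h', max_eq_right (by linarith)]; ring
      · rw [h, Real.sign_zero, abs_zero, zero_mul, sub_zero, zero_sub,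
          max_eq_right (by linarith : -w ≤ (0:ℝ))]
        try ring
      · rw [Real.sign_of_pos h, abs_of_pos h]
        rcases le_total w (u j) with h' | h'
        · rw [min_eq_left h', max_eq_left (by linarith)]; ring
        · rw [min_eq_right h', max_eq_right (by linarith)]; ring
    have e3 : |(1 / M) * Real.sign v * w| = w / M := by
      rw [abs_mul, abs_mul, hsv, abs_of_nonneg hw0, abs_of_pos (by positivity : (0:ℝ) < 1/M)]
      ring
    rw [e1, e3]
    simp_rw [e2]
  rw [hval]
  -- main inequality
  intro b W hWb
  set t := M * |b| with htdef
  have ht0 : 0 ≤ t := by positivity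
  have hq1 : (1/2) * (|v| - w/M)^2 + ((w/M - |v|)/M) * (t - w) ≤ (1/2) * (v - b)^2 := by
    have h1 : (|v| - t/M)^2 ≤ (v - b)^2 := by
      have ht : t / M = |b| := by rw [htdef]; field_simp
      rw [ht]
      nlinarith [le_abs_self (v * b), abs_mul v b, sq_abs v, sq_abs b]
    have hid : (1/2)*(|v| - t/M)^2
        = (1/2)*(|v| - w/M)^2 + ((w/M - |v|)/M)*(t - w) + (1/2)*((t - w)/M)^2 := by ring
    have h2 : (0:ℝ) ≤ (1/2)*((t - w)/M)^2 := by positivity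
    linarith
  have hq2 : ∀ j : Fin K, (1/2) * (max (|u j| - w) 0)^2 - (max (|u j| - w) 0) * (t - w)
      ≤ (1/2) * (u j - W j)^2 := by
    intro j
    refine le_trans (sq_max_lb (|u j|) w t) ?_
    have h1 : max (|u j| - t) 0 ≤ |u j - W j| := by
      rcases le_total (|u j| - t) 0 with h | h
      · rw [max_eq_right h]; positivity
      · rw [max_eq_left h]
        have := hWb j
        have habs : |u j| - |W j| ≤ |u j - W j| := abs_sub_abs_le_abs_sub _ _
        linarith
    have h2 : (max (|u j| - t) 0)^2 ≤ (u j - W j)^2 := by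
      rw [← sq_abs (u j - W j)]
      exact pow_le_pow_left₀ (le_max_right _ _) h1 2
    linarith
  have hq2' : (1/2) * ∑ j, (max (|u j| - w) 0)^2 - (S - mt * w) * (t - w)
      ≤ (1/2) * ∑ j, (u j - W j)^2 := by
    have := Finset.sum_le_sum (fun j (_ : j ∈ Finset.univ) => hq2 j)
    rw [Finset.sum_sub_distrib, ← Finset.mul_sum, ← Finset.mul_sum, ← Finset.sum_mul, hsum]
      at this
    linarith
  have hgt : 0 ≤ g * (t - w) := by
    have h1 : g * (t - w) = g * t - g * w := by ring
    rw [h1, hg.2, sub_zero]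
    exact mul_nonneg hg.1 ht0
  have hexp : g * (t - w) = ((w/M - |v|)/M) * (t - w) + (lam / M) * (t - w)
      - (S - mt * w) * (t - w) := by
    rw [hgdef]; ring
  have hlam' : lam * |b| = lam * (w/M) + (lam / M) * (t - w) := by
    rw [htdef]
    field_simp
    ring
  simp only [obj1]
  exact lin_aux hq1 hq2' hlam' hexp hgt
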